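/- Let K be even, supported in [−2−s,2+s], with K ≥ 0 on [−2,2] (positive part K₊) and K ≤ 0 on [2,2+s]∪[−2−s,−2] (negative part K₋), K₊ nonincreasing on [0,2], and ∫₀² K₊ ≥ 1 + ∫|K₋|. Let B = {u : [−r,r] → ℝ : u = 1 on (1,r], u = −1 on [−r,−1), u odd nondecreasing}, r > 4+2s. Then u ↦ f((K∗ũ)|_{[−r,r]}) maps B into B, where f(x) = max(−1, min(1,x)). -/

import Mathlib

open MeasureTheory

/-- The saturation function `f(x) = max(−1, min(1, x))`. -/
noncomputable def sat (x : ℝ) : ℝ := max (-1) (min 1 x)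

/-- Membership in the invariant set `B`: `u = 1` on `(1, r]`, `u = −1` on `[−r, −1)`,
`u` odd and nondecreasing on `[−r, r]`. -/
def memB (r : ℝ) (u : ℝ → ℝ) : Prop :=
  (∀ x : ℝ, 1 < x → x ≤ r → u x = 1) ∧
  (∀ x : ℝ, x < -1 → -r ≤ x → u x = -1) ∧
  (∀ x ∈ Set.Icc (-r) r, u (-x) = -u x) ∧
  MonotoneOn u (Set.Icc (-r) r)

/-!
Write `g = K ∗ ũ`. Since `K` is even and `ũ` odd, `g` is odd. For `x ∈ [-1, 1]`, the points
`x - y` with `y ∈ [-2, 2]` stay in `[-r, r]`, where `ũ` is nondecreasing and `K ≥ 0`, while for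
`y` in the negative zones `ũ (x - y) = ∓1` does not depend on `x`; so `g` is nondecreasing on
`[-1, 1]`. For `x ∈ (1, r]`, bounding `|ũ| ≤ 1` against `K₋` and folding `K₊` onto `[0, 2]` gives
`g x ≥ ∫₀² K₊ φ + ∫₀² K₊ - ∫ K₋` with `φ z = ũ (x - z) + ũ (x + z) - 1`. Both `K₊` and `φ` are
nonincreasing on `[0, 2]`, and `∫₀² φ = ∫_{x-2}^{x+2} ũ - 2 ≥ 0` because the part of the window
below `|x - 2|` cancels by oddness and the rest contains an interval of length `2` inside
`(1, r]`. Chebyshev's integral inequality then gives `∫₀² K₊ φ ≥ 0`, hence `g x ≥ 1`.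
-/

open Set

theorem sat_neg (a : ℝ) : sat (-a) = -sat a := by
  simp only [sat, max_def, min_def]
  split_ifs <;> linarith

theorem sat_of_one_le {a : ℝ} (h : 1 ≤ a) : sat a = 1 := by
  simp [sat, h]

theorem sat_of_le_neg_one {a : ℝ} (h : a ≤ -1) : sat a = -1 := by
  simp [sat, h, h.trans (by norm_num : (-1 : ℝ) ≤ 1)]

theorem monotone_sat : Monotone sat :=
  fun _ _ h => max_le_max le_rfl (min_le_min le_rfl h)

theorem sat_mem_Icc (a : ℝ) : sat a ∈ Icc (-1) 1 :=
  ⟨le_max_left _ _, max_le (by norm_num) (min_le_left _ _)⟩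

theorem memB_sat_of_odd {r : ℝ} {g : ℝ → ℝ} (hodd : ∀ x, g (-x) = -g x)
    (hmono : MonotoneOn g (Icc (-1) 1)) (hone : ∀ x, 1 < x → x ≤ r → 1 ≤ g x) :
    memB r (fun x => sat (g x)) := by
  have hneg : ∀ x, x < -1 → -r ≤ x → sat (g x) = -1 := fun x h₁ h₂ =>
    sat_of_le_neg_one (by linarith [hodd x, hone (-x) (by linarith) (by linarith)])
  refine ⟨fun x h₁ h₂ => sat_of_one_le (hone x h₁ h₂), hneg,
    fun x _ => by simp only [hodd, sat_neg], ?_⟩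
  intro x₁ hx₁ x₂ hx₂ h
  show sat (g x₁) ≤ sat (g x₂)
  rcases lt_or_ge x₁ (-1) with h₁ | h₁
  · rw [hneg x₁ h₁ hx₁.1]
    exact (sat_mem_Icc _).1
  rcases lt_or_ge 1 x₂ with h₂ | h₂
  · rw [sat_of_one_le (hone x₂ h₂ hx₂.2)]
    exact (sat_mem_Icc _).2
  exact monotone_sat (hmono ⟨h₁, h.trans h₂⟩ ⟨h₁.trans h, h₂⟩ h)

theorem intervalIntegral_eq_zero_of_odd {f : ℝ → ℝ} (hf : ∀ x, f (-x) = -f x) (a : ℝ) :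
    ∫ x in -a..a, f x = 0 := by
  have h := intervalIntegral.integral_comp_neg (a := -a) (b := a) f
  simp only [hf, intervalIntegral.integral_neg, neg_neg] at h
  linarith

theorem integral_eq_intervalIntegral_add_comp_neg {f : ℝ → ℝ} (hf : Integrable f) {a : ℝ}
    (ha : 0 ≤ a) (hf0 : ∀ z ∉ Icc (-a) a, f z = 0) :
    ∫ z, f z = ∫ z in 0..a, (f z + f (-z)) := by
  rw [← setIntegral_eq_integral_of_forall_compl_eq_zero hf0, integral_Icc_eq_integral_Ioc,
    ← intervalIntegral.integral_of_le (by linarith),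
    ← intervalIntegral.integral_add_adjacent_intervals (b := 0) hf.intervalIntegrable
      hf.intervalIntegrable,
    intervalIntegral.integral_add hf.intervalIntegrable hf.comp_neg.intervalIntegrable,
    intervalIntegral.integral_comp_neg, neg_zero, add_comm]

theorem intervalIntegral_comp_sub_add_comp_add {v : ℝ → ℝ} (hv : Integrable v) (x a : ℝ) :
    ∫ z in 0..a, (v (x - z) + v (x + z)) = ∫ t in (x - a)..(x + a), v t := by
  rw [intervalIntegral.integral_add (hv.comp_sub_left x).intervalIntegrable
      (hv.comp_add_left x).intervalIntegrable,
    intervalIntegral.integral_comp_sub_left, intervalIntegral.integral_comp_add_left, sub_zero,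
    add_zero, intervalIntegral.integral_add_adjacent_intervals hv.intervalIntegrable
      hv.intervalIntegrable]

theorem integral_mul_comp_sub_eq_intervalIntegral {P w : ℝ → ℝ} {a x : ℝ}
    (hP : ∀ z, P (-z) = P z) (ha : 0 ≤ a) (hP0 : ∀ z ∉ Icc (-a) a, P z = 0)
    (hPw : Integrable fun z => P z * w (x - z)) :
    ∫ z, P z * w (x - z) = ∫ z in 0..a, P z * (w (x - z) + w (x + z)) := by
  rw [integral_eq_intervalIntegral_add_comp_neg hPw ha fun z hz => by rw [hP0 z hz, zero_mul]]
  simp only [hP, sub_neg_eq_add, mul_add]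

theorem integral_posPart_mul_sub_le {K w : ℝ → ℝ} (hK : Integrable K)
    (hw : AEStronglyMeasurable w) (hw1 : ∀ z, |w z| ≤ 1) :
    (∫ z, max (K z) 0 * w z) - ∫ z, max (-K z) 0 ≤ ∫ z, K z * w z := by
  have hbound : ∀ᵐ z ∂volume, ‖w z‖ ≤ 1 := ae_of_all _ hw1
  have hPw := hK.pos_part.mul_bdd hw hbound
  rw [← integral_sub hPw hK.neg_part]
  refine integral_mono (hPw.sub hK.neg_part) (hK.mul_bdd hw hbound) fun z => ?_
  have hwz := abs_le.1 (hw1 z)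
  rcases le_total (K z) 0 with h | h
  · simp only [max_eq_right h, max_eq_left (neg_nonneg.2 h)]
    nlinarith
  · simp only [max_eq_left h, max_eq_right (neg_nonpos.2 h)]
    simp

theorem intervalIntegral_mul_nonneg_of_antitoneOn {f g : ℝ → ℝ} {a b : ℝ} (hab : a ≤ b)
    (hf : AntitoneOn f (Icc a b)) (hf0 : ∀ z ∈ Icc a b, 0 ≤ f z) (hg : AntitoneOn g (Icc a b))
    (hgi : IntervalIntegrable g volume a b)
    (hfgi : IntervalIntegrable (fun z => f z * g z) volume a b)
    (hg0 : 0 ≤ ∫ z in a..b, g z) :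
    0 ≤ ∫ z in a..b, f z * g z := by
  -- At the last point `t` where `g ≥ 0`, the sign change of `f - f t` matches that of `g`.
  set S := {z ∈ Icc a b | 0 ≤ g z}
  have hS : ∀ z ∈ insert a S, z ≤ b := by
    rintro z (rfl | ⟨hz, _⟩)
    exacts [hab, hz.2]
  set t := sSup (insert a S)
  have ht : t ∈ Icc a b :=
    ⟨le_csSup ⟨b, hS⟩ (mem_insert _ _), csSup_le (insert_nonempty _ _) hS⟩
  have key : ∀ z ∈ Icc a b, 0 ≤ (f z - f t) * g z := by
    intro z hz
    rcases lt_trichotomy z t with h | rfl | h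
    · obtain ⟨w, hw, hzw⟩ := exists_lt_of_lt_csSup (insert_nonempty _ _) h
      have hwS : w ∈ S := hw.resolve_left (by rintro rfl; exact hzw.not_ge hz.1)
      exact mul_nonneg (sub_nonneg.2 (hf hz ht h.le)) (hwS.2.trans (hg hz hwS.1 hzw.le))
    · simp
    · have hgz : g z < 0 :=
        not_le.1 fun hgz => h.not_ge (le_csSup ⟨b, hS⟩ (mem_insert_of_mem _ ⟨hz, hgz⟩))
      exact mul_nonneg_of_nonpos_of_nonpos (sub_nonpos.2 (hf ht hz h.le)) hgz.le
  have hsplit : ∫ z in a..b, (f z - f t) * g z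
      = (∫ z in a..b, f z * g z) - f t * ∫ z in a..b, g z := by
    simp_rw [sub_mul]
    rw [intervalIntegral.integral_sub hfgi (hgi.const_mul _), intervalIntegral.integral_const_mul]
  linarith [intervalIntegral.integral_nonneg (μ := volume) hab key, mul_nonneg (hf0 t ht) hg0]

theorem integral_comp_sub_mul_eq (K v : ℝ → ℝ) (x : ℝ) :
    ∫ y, K (x - y) * v y = ∫ z, K z * v (x - z) := by
  rw [← integral_sub_left_eq_self _ volume x]
  simp only [sub_sub_cancel]

theorem integral_comp_neg_sub_mul_of_even_of_odd {K v : ℝ → ℝ} (hK : ∀ z, K (-z) = K z)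
    (hv : ∀ t, v (-t) = -v t) (x : ℝ) :
    ∫ y, K (-x - y) * v y = -∫ y, K (x - y) * v y := by
  rw [← integral_neg_eq_self, ← integral_neg]
  congr 1
  ext y
  rw [show -x - -y = -(x - y) by ring, hK, hv, mul_neg]

namespace memB

variable {r : ℝ} {u : ℝ → ℝ}

theorem mem_Icc (hu : memB r u) (hr : 1 < r) {x : ℝ} (hx : x ∈ Icc (-r) r) :
    u x ∈ Icc (-1) 1 := by
  have hlo := hu.2.2.2 ⟨le_rfl, by linarith⟩ hx hx.1
  have hhi := hu.2.2.2 hx ⟨by linarith, le_rfl⟩ hx.2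
  rw [hu.2.1 (-r) (by linarith) le_rfl] at hlo
  rw [hu.1 r hr le_rfl] at hhi
  exact ⟨hlo, hhi⟩

theorem abs_indicator_le_one (hu : memB r u) (hr : 1 < r) (x : ℝ) :
    |(Icc (-r) r).indicator u x| ≤ 1 := by
  by_cases hx : x ∈ Icc (-r) r
  · rw [indicator_of_mem hx, abs_le]
    exact hu.mem_Icc hr hx
  · simp [indicator_of_notMem hx]

theorem indicator_neg (hu : memB r u) (x : ℝ) :
    (Icc (-r) r).indicator u (-x) = -(Icc (-r) r).indicator u x := by
  by_cases hx : x ∈ Icc (-r) r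
  · have hx' : -x ∈ Icc (-r) r := ⟨by linarith [hx.2], by linarith [hx.1]⟩
    rw [indicator_of_mem hx, indicator_of_mem hx', hu.2.2.1 x hx]
  · have hx' : -x ∉ Icc (-r) r := fun h => hx ⟨by linarith [h.2], by linarith [h.1]⟩
    rw [indicator_of_notMem hx, indicator_of_notMem hx', neg_zero]

theorem indicator_eq_one (hu : memB r u) {x : ℝ} (h₁ : 1 < x) (h₂ : x ≤ r) :
    (Icc (-r) r).indicator u x = 1 := by
  rw [indicator_of_mem (show x ∈ Icc (-r) r from ⟨by linarith, h₂⟩), hu.1 x h₁ h₂]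

theorem indicator_eq_neg_one (hu : memB r u) {x : ℝ} (h₁ : x < -1) (h₂ : -r ≤ x) :
    (Icc (-r) r).indicator u x = -1 := by
  rw [indicator_of_mem (show x ∈ Icc (-r) r from ⟨h₂, by linarith⟩), hu.2.1 x h₁ h₂]

theorem indicator_nonneg (hu : memB r u) {x : ℝ} (hx : 0 ≤ x) :
    0 ≤ (Icc (-r) r).indicator u x := by
  by_cases hxr : x ∈ Icc (-r) r
  · have h0 : (0 : ℝ) ∈ Icc (-r) r := ⟨by linarith [hxr.2], by linarith [hxr.2]⟩
    have hu0 : u 0 = 0 := by linarith [neg_zero (G := ℝ) ▸ hu.2.2.1 0 h0]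
    rw [indicator_of_mem hxr, ← hu0]
    exact hu.2.2.2 h0 hxr hx
  · rw [indicator_of_notMem hxr]

theorem monotoneOn_indicator (hu : memB r u) :
    MonotoneOn ((Icc (-r) r).indicator u) (Icc (-r) r) :=
  hu.2.2.2.congr eqOn_indicator.symm

theorem antitoneOn_indicator (hu : memB r u) :
    AntitoneOn ((Icc (-r) r).indicator u) (Ioi 1) := by
  intro x hx y hy hxy
  by_cases hyr : y ≤ r
  · rw [hu.indicator_eq_one hx (hxy.trans hyr), hu.indicator_eq_one hy hyr]
  · rw [indicator_of_notMem fun h => hyr h.2]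
    exact hu.indicator_nonneg (by linarith [mem_Ioi.1 hx])

theorem antitoneOn_indicator_comp_sub_add_comp_add (hu : memB r u) {x : ℝ} (hx₁ : 1 < x)
    (hxr : x ≤ r) :
    AntitoneOn (fun z => (Icc (-r) r).indicator u (x - z) + (Icc (-r) r).indicator u (x + z))
      (Icc 0 2) := by
  have h₁ : AntitoneOn (fun z => (Icc (-r) r).indicator u (x - z)) (Icc 0 2) :=
    hu.monotoneOn_indicator.comp_AntitoneOn (fun _ _ _ _ h => by linarith)
      fun z hz => ⟨by linarith [hz.2], by linarith [hz.1]⟩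
  have h₂ : AntitoneOn (fun z => (Icc (-r) r).indicator u (x + z)) (Icc 0 2) :=
    hu.antitoneOn_indicator.comp_MonotoneOn (fun _ _ _ _ h => by linarith)
      fun z hz => by simp only [mem_Ioi]; linarith [hz.1]
  exact h₁.add h₂

theorem integrable_indicator (hu : memB r u) (hr : 1 < r) (hum : Measurable u) :
    Integrable ((Icc (-r) r).indicator u) := by
  refine (Measure.integrableOn_of_bounded (M := 1) measure_Icc_lt_top.ne
    hum.aestronglyMeasurable ?_).integrable_indicator measurableSet_Icc
  filter_upwards [ae_restrict_mem measurableSet_Icc] with x hx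
  rw [Real.norm_eq_abs, abs_le]
  exact hu.mem_Icc hr hx

theorem integrable_mul_indicator_comp {K g : ℝ → ℝ} (hu : memB r u) (hr : 1 < r)
    (hum : Measurable u) (hK : Integrable K) (hg : Measurable g) :
    Integrable fun z => K z * (Icc (-r) r).indicator u (g z) :=
  hK.mul_bdd ((hum.indicator measurableSet_Icc).comp hg).aestronglyMeasurable
    (ae_of_all _ fun z => (Real.norm_eq_abs _).trans_le (hu.abs_indicator_le_one hr (g z)))

theorem two_le_intervalIntegral_indicator (hu : memB r u) (hr : 3 ≤ r) (hum : Measurable u)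
    {x : ℝ} (hx₁ : 1 < x) (hxr : x ≤ r) :
    2 ≤ ∫ t in (x - 2)..(x + 2), (Icc (-r) r).indicator u t := by
  have hv := hu.integrable_indicator (by linarith) hum
  have hcancel : ∫ t in (x - 2)..|x - 2|, (Icc (-r) r).indicator u t = 0 := by
    rcases le_total 0 (x - 2) with h | h
    · rw [abs_of_nonneg h, intervalIntegral.integral_same]
    · simpa [abs_of_nonpos h] using intervalIntegral_eq_zero_of_odd hu.indicator_neg (-(x - 2))
  set a := max 1 (x - 2)
  have ha : a + 2 ≤ r := by
    rcases max_cases 1 (x - 2) with ⟨h, _⟩ | ⟨h, _⟩ <;> simp only [a, h] <;> linarith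
  have hone : ∫ t in a..(a + 2), (Icc (-r) r).indicator u t = 2 := by
    rw [intervalIntegral.integral_congr_ae (g := fun _ => 1) (ae_of_all _ fun t ht => ?_)]
    · simp
    rw [uIoc_of_le (by linarith)] at ht
    exact hu.indicator_eq_one ((le_max_left _ _).trans_lt ht.1) (ht.2.trans ha)
  have hmono : ∫ t in a..(a + 2), (Icc (-r) r).indicator u t
      ≤ ∫ t in |x - 2|..(x + 2), (Icc (-r) r).indicator u t := by
    refine intervalIntegral.integral_mono_interval ?_ (by linarith)
      (by linarith [max_le hx₁.le (by linarith : x - 2 ≤ x)]) ?_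
      hv.intervalIntegrable
    · rcases abs_cases (x - 2) with ⟨h, _⟩ | ⟨h, _⟩ <;> rw [h]
      exacts [le_max_right _ _, by linarith [le_max_left 1 (x - 2)]]
    · filter_upwards [ae_restrict_mem measurableSet_Ioc] with t ht
      exact hu.indicator_nonneg ((abs_nonneg _).trans ht.1.le)
  rw [← intervalIntegral.integral_add_adjacent_intervals hv.intervalIntegrable
    hv.intervalIntegrable, hcancel]
  linarith

end memB

section Kernel

variable {s r : ℝ} {K u : ℝ → ℝ}

theorem posPart_eq_zero_of_notMem_Icc (hKsupp : Function.support K ⊆ Icc (-2 - s) (2 + s))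
    (hKneg : ∀ z, z ∈ Icc (2 : ℝ) (2 + s) ∪ Icc (-2 - s) (-2 : ℝ) → K z ≤ 0) {z : ℝ}
    (hz : z ∉ Icc (-2 : ℝ) 2) : max (K z) 0 = 0 := by
  refine max_eq_right (not_lt.1 fun hK => (hKneg z ?_).not_gt hK)
  have hzs : z ∈ Icc (-2 - s) (2 + s) := hKsupp hK.ne'
  rcases not_and_or.1 hz with h | h
  · exact Or.inr ⟨hzs.1, (not_le.1 h).le⟩
  · exact Or.inl ⟨(not_le.1 h).le, hzs.2⟩

theorem mul_indicator_comp_sub_le (hs : 0 ≤ s) (hr : 3 + s ≤ r)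
    (hKsupp : Function.support K ⊆ Icc (-2 - s) (2 + s))
    (hKpos : ∀ z ∈ Icc (-2 : ℝ) 2, 0 ≤ K z) (hu : memB r u) {x₁ x₂ : ℝ}
    (hx₁ : x₁ ∈ Icc (-1 : ℝ) 1) (hx₂ : x₂ ∈ Icc (-1 : ℝ) 1) (h : x₁ ≤ x₂) (z : ℝ) :
    K z * (Icc (-r) r).indicator u (x₁ - z) ≤ K z * (Icc (-r) r).indicator u (x₂ - z) := by
  obtain ⟨h₁, h₁'⟩ := hx₁
  obtain ⟨h₂, h₂'⟩ := hx₂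
  by_cases hz : z ∈ Icc (-2 : ℝ) 2
  · obtain ⟨hz, hz'⟩ := hz
    refine mul_le_mul_of_nonneg_left (hu.monotoneOn_indicator ?_ ?_ (by linarith))
      (hKpos z ⟨hz, hz'⟩) <;> constructor <;> linarith
  by_cases hK : K z = 0
  · simp [hK]
  obtain ⟨hzs, hzs'⟩ : z ∈ Icc (-2 - s) (2 + s) := hKsupp hK
  rcases not_and_or.1 hz with hz | hz <;> rw [not_le] at hz
  · rw [hu.indicator_eq_one (by linarith) (by linarith),
      hu.indicator_eq_one (by linarith) (by linarith)]
  · rw [hu.indicator_eq_neg_one (by linarith) (by linarith),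
      hu.indicator_eq_neg_one (by linarith) (by linarith)]

theorem monotoneOn_integral_mul_indicator (hs : 0 ≤ s) (hr : 3 + s ≤ r) (hKi : Integrable K)
    (hKsupp : Function.support K ⊆ Icc (-2 - s) (2 + s))
    (hKpos : ∀ z ∈ Icc (-2 : ℝ) 2, 0 ≤ K z) (hu : memB r u) (hum : Measurable u) :
    MonotoneOn (fun x => ∫ y, K (x - y) * (Icc (-r) r).indicator u y) (Icc (-1) 1) := by
  intro x₁ hx₁ x₂ hx₂ h
  have hint (x : ℝ) := hu.integrable_mul_indicator_comp (by linarith) hum hKi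
    (measurable_const_sub x)
  simp only [integral_comp_sub_mul_eq K]
  exact integral_mono (hint x₁) (hint x₂)
    (mul_indicator_comp_sub_le hs hr hKsupp hKpos hu hx₁ hx₂ h)

theorem one_le_integral_mul_indicator (hr : 3 ≤ r) (hKi : Integrable K)
    (hKeven : ∀ z, K (-z) = K z) (hP0 : ∀ z ∉ Icc (-2 : ℝ) 2, max (K z) 0 = 0)
    (hKmono : AntitoneOn (fun z => max (K z) 0) (Icc 0 2))
    (hKmass : 1 + ∫ z, max (-K z) 0 ≤ ∫ z in Ioc (0 : ℝ) 2, max (K z) 0)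
    (hu : memB r u) (hum : Measurable u) {x : ℝ} (hx₁ : 1 < x) (hxr : x ≤ r) :
    1 ≤ ∫ y, K (x - y) * (Icc (-r) r).indicator u y := by
  set v := (Icc (-r) r).indicator u
  set P := fun z => max (K z) 0
  set φ := fun z => v (x - z) + v (x + z) - 1
  have hv : Integrable v := hu.integrable_indicator (by linarith) hum
  have hv1 : ∀ t, |v t| ≤ 1 := hu.abs_indicator_le_one (by linarith)
  have hψ : Integrable fun z => v (x - z) + v (x + z) :=
    (hv.comp_sub_left x).add (hv.comp_add_left x)
  have hφ : 0 ≤ ∫ z in 0..2, φ z := by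
    rw [intervalIntegral.integral_sub hψ.intervalIntegrable intervalIntegrable_const,
      intervalIntegral_comp_sub_add_comp_add hv]
    simp only [intervalIntegral.integral_const, sub_zero, smul_eq_mul, mul_one]
    linarith [hu.two_le_intervalIntegral_indicator hr hum hx₁ hxr]
  have hPφ : IntervalIntegrable (fun z => P z * φ z) volume 0 2 := by
    refine (hKi.pos_part.mul_bdd (c := 3) (hψ.aestronglyMeasurable.sub
      aestronglyMeasurable_const) (ae_of_all _ fun z => ?_)).intervalIntegrable
    show ‖v (x - z) + v (x + z) - 1‖ ≤ 3
    rw [Real.norm_eq_abs, abs_le]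
    have := abs_le.1 (hv1 (x - z))
    have := abs_le.1 (hv1 (x + z))
    constructor <;> linarith
  have hfold : ∫ z, P z * v (x - z) = (∫ z in 0..2, P z * φ z) + ∫ z in 0..2, P z := by
    rw [integral_mul_comp_sub_eq_intervalIntegral (fun z => by simp only [hKeven]) zero_le_two
        hP0 (hu.integrable_mul_indicator_comp (by linarith) hum hKi.pos_part
          (measurable_const_sub x)),
      ← intervalIntegral.integral_add hPφ hKi.pos_part.intervalIntegrable]
    congr 1
    ext z
    ring
  have hcheb : 0 ≤ ∫ z in 0..2, P z * φ z :=
    intervalIntegral_mul_nonneg_of_antitoneOn zero_le_two hKmono (fun z _ => le_max_right _ _)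
      ((hu.antitoneOn_indicator_comp_sub_add_comp_add hx₁ hxr).add_const (-1))
      (hψ.intervalIntegrable.sub intervalIntegrable_const) hPφ hφ
  rw [← intervalIntegral.integral_of_le zero_le_two] at hKmass
  calc 1 ≤ (∫ z, P z * v (x - z)) - ∫ z, max (-K z) 0 := by linarith
    _ ≤ ∫ z, K z * v (x - z) :=
      integral_posPart_mul_sub_le hKi ((hum.indicator measurableSet_Icc).comp
        (measurable_const_sub x)).aestronglyMeasurable fun z => hv1 (x - z)
    _ = ∫ y, K (x - y) * v y := (integral_comp_sub_mul_eq K v x).symm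

end Kernel

/-- Let `K` be even, supported in `[−2−s, 2+s]`, nonnegative on `[−2,2]`
(positive part `K₊`), nonpositive on `[2,2+s] ∪ [−2−s,−2]` (negative part `K₋`), with `K₊`
nonincreasing on `[0,2]` and `∫₀² K₊ ≥ 1 + ∫|K₋|`.  With
`B = {u : [−r,r] → ℝ : u = 1 on (1,r], u = −1 on [−r,−1), u odd and nondecreasing}`
(`r > 4 + 2s`), the map `u ↦ f((K ∗ ũ)|_{[−r,r]})` maps `B` into `B`, where `f` is the
saturation function. -/
theorem invariant_set_small_inhibition
    (s : ℝ) (hs : 0 < s)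
    (r : ℝ) (hr : 4 + 2 * s < r)
    (K : ℝ → ℝ) (hKi : Integrable K volume)
    (hKeven : ∀ z, K (-z) = K z)
    (hKsupp : Function.support K ⊆ Set.Icc (-2 - s) (2 + s))
    (hKpos : ∀ z ∈ Set.Icc (-2 : ℝ) 2, 0 ≤ K z)
    (hKneg : ∀ z, z ∈ Set.Icc (2 : ℝ) (2 + s) ∪ Set.Icc (-2 - s) (-2 : ℝ) → K z ≤ 0)
    (hKmono : AntitoneOn (fun z => max (K z) 0) (Set.Icc 0 2))
    (hKmass : 1 + ∫ z, max (-K z) 0 ≤ ∫ z in Set.Ioc (0:ℝ) 2, max (K z) 0)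
    (u : ℝ → ℝ) (hum : Measurable u) (hu : memB r u) :
    memB r (fun x => sat (∫ y, K (x - y) * Set.indicator (Set.Icc (-r) r) u y)) :=
  memB_sat_of_odd (integral_comp_neg_sub_mul_of_even_of_odd hKeven hu.indicator_neg)
    (monotoneOn_integral_mul_indicator hs.le (by linarith) hKi hKsupp hKpos hu hum)
    fun _ hx₁ hxr => one_le_integral_mul_indicator (by linarith) hKi hKeven
      (fun _ hz => posPart_eq_zero_of_notMem_Icc hKsupp hKneg hz) hKmono hKmass hu hum hx₁ hxr
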